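/- Let n ≥ 5 be an integer and let A† be the n×n tridiagonal matrix associated with a := 1 and b := i (where i = √−1). Then det(A†) = (1 + 2i)·F_n, where F_n is the n-th Fibonacci number. -/

import Mathlib

/-- The `n × n` complex tridiagonal matrix `A†` (1-based indices): `A†_{1,1} = A†_{n,n} = a + b`,
`A†_{j,j} = a` for `2 ≤ j ≤ n-1`, `A†_{1,2} = A†_{2,1} = b`, `A†_{n-1,n} = A†_{n,n-1} = b`,
`A†_{j,j+1} = A†_{j+1,j} = -b` for `2 ≤ j ≤ n-2`, all other entries `0`. -/
def matAdag (n : ℕ) (a b : ℂ) : Matrix (Fin n) (Fin n) ℂ :=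
  Matrix.of fun i j =>
    let i' := (i : ℕ) + 1
    let j' := (j : ℕ) + 1
    if i' = j' then (if i' = 1 ∨ i' = n then a + b else a)
    else if (i' = 1 ∧ j' = 2) ∨ (i' = 2 ∧ j' = 1) ∨ (i' = n - 1 ∧ j' = n) ∨ (i' = n ∧ j' = n - 1) then b
    else if (i' + 1 = j' ∨ j' + 1 = i') ∧ 2 ≤ min i' j' ∧ min i' j' ≤ n - 2 then -b
    else 0

/-!
`A†` is tridiagonal, so expanding along the last row gives the continuant recurrence
`D (m + 2) = d (m + 1) * D (m + 1) - u m * l m * D m` for its leading principal minors `D`.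
For `a = 1`, `b = i` every product of opposite off-diagonal entries is `b² = -1` and every
interior diagonal entry is `1`, so the recurrence is Fibonacci's and `D (m + 1) = (1 + i) F (m + 1) + F m`
as long as the minor avoids the last row. The final step, with corner entry `1 + i`, gives
`(1 + i) D (n - 1) + D (n - 2) = (1 + 2i) F n`.
-/

open Matrix

section Tridiagonal

variable {R : Type*} [CommRing R]

def tridiag (d u l : ℕ → R) (n : ℕ) : Matrix (Fin n) (Fin n) R :=
  Matrix.of fun i j =>
    if (i : ℕ) = j then d i
    else if (i : ℕ) + 1 = j then u i
    else if (j : ℕ) + 1 = i then l j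
    else 0

variable {d u l : ℕ → R} {n : ℕ} {i j : Fin n}

theorem tridiag_apply_of_eq (h : (i : ℕ) = j) : tridiag d u l n i j = d i := by
  simp [tridiag, h]

theorem tridiag_apply_of_add_one_eq (h : (i : ℕ) + 1 = j) : tridiag d u l n i j = u i := by
  simp only [tridiag, of_apply]
  rw [if_neg (by omega), if_pos h]

theorem tridiag_apply_of_eq_add_one (h : (i : ℕ) = j + 1) : tridiag d u l n i j = l j := by
  simp only [tridiag, of_apply]
  rw [if_neg (by omega), if_neg (by omega), if_pos h.symm]

theorem tridiag_apply_eq_zero (h : (i : ℕ) + 1 < j ∨ (j : ℕ) + 1 < i) :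
    tridiag d u l n i j = 0 := by
  simp only [tridiag, of_apply]
  rw [if_neg, if_neg, if_neg] <;> omega

variable (d u l n)

@[simp]
theorem tridiag_submatrix_castSucc :
    (tridiag d u l (n + 1)).submatrix Fin.castSucc Fin.castSucc = tridiag d u l n := by
  ext i j
  simp [tridiag]

theorem det_tridiag_add_two :
    (tridiag d u l (n + 2)).det =
      d (n + 1) * (tridiag d u l (n + 1)).det - u n * l n * (tridiag d u l n).det := by
  have hminor :
      ((tridiag d u l (n + 2)).submatrix Fin.castSucc (Fin.last n).castSucc.succAbove).det =
        u n * (tridiag d u l n).det := by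
    have hcols : (Fin.last n).castSucc.succAbove ∘ Fin.castSucc = Fin.castSucc ∘ Fin.castSucc := by
      ext j
      simp [Fin.succAbove_castSucc_of_lt _ _ (Fin.castSucc_lt_last j)]
    rw [det_succ_column _ (Fin.last n), Fin.sum_univ_castSucc, Finset.sum_eq_zero, zero_add]
    · rw [Fin.succAbove_last, submatrix_submatrix, hcols, ← submatrix_submatrix,
        tridiag_submatrix_castSucc, tridiag_submatrix_castSucc, submatrix_apply,
        Fin.succAbove_castSucc_self, tridiag_apply_of_add_one_eq (by simp)]
      simp [← two_mul, pow_mul]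
    · intro i _
      rw [submatrix_apply, Fin.succAbove_castSucc_self, tridiag_apply_eq_zero (by simp)]
      ring
  rw [det_succ_row _ (Fin.last (n + 1)), Fin.succAbove_last, Fin.sum_univ_castSucc,
    Fin.sum_univ_castSucc, Finset.sum_eq_zero, zero_add, hminor, Fin.succAbove_last,
    tridiag_submatrix_castSucc, tridiag_apply_of_eq_add_one (by simp), tridiag_apply_of_eq rfl]
  · simp [← two_mul, pow_mul]
    ring
  · intro j _
    rw [tridiag_apply_eq_zero (by simp)]
    ring

variable {d u l n}

theorem det_tridiag_eq_fib (hd : ∀ k < n, d (k + 1) = 1) (hul : ∀ k < n, u k * l k = -1) :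
    (tridiag d u l (n + 1)).det = Nat.fib (n + 1) * d 0 + Nat.fib n := by
  induction n using Nat.twoStepInduction with
  | zero => simp [tridiag_apply_of_eq]
  | one =>
    rw [det_tridiag_add_two, hd 0 one_pos, hul 0 one_pos]
    simp [tridiag_apply_of_eq]
  | more n ih₀ ih₁ =>
    rw [det_tridiag_add_two, hd (n + 1) (by omega), hul (n + 1) (by omega),
      ih₁ (fun k hk => hd k (by omega)) (fun k hk => hul k (by omega)),
      ih₀ (fun k hk => hd k (by omega)) (fun k hk => hul k (by omega)),
      Nat.fib_add_two (n := n + 1), Nat.fib_add_two (n := n)]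
    push_cast
    ring

end Tridiagonal

def matAdagDiag (n : ℕ) (a b : ℂ) (k : ℕ) : ℂ :=
  if k = 0 ∨ k = n - 1 then a + b else a

def matAdagOffDiag (n : ℕ) (b : ℂ) (k : ℕ) : ℂ :=
  if k = 0 ∨ k = n - 2 then b else -b

theorem matAdagOffDiag_mul_self (n : ℕ) (b : ℂ) (k : ℕ) :
    matAdagOffDiag n b k * matAdagOffDiag n b k = b * b := by
  unfold matAdagOffDiag
  split_ifs <;> ring

theorem matAdag_eq_tridiag (n : ℕ) (a b : ℂ) :
    matAdag n a b = tridiag (matAdagDiag n a b) (matAdagOffDiag n b) (matAdagOffDiag n b) n := by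
  ext i j
  simp only [matAdag, tridiag, matAdagDiag, matAdagOffDiag, of_apply]
  split_ifs <;> first | rfl | omega

/-- For `n ≥ 5`, the matrix `A†` with `a := 1`, `b := i` satisfies
`det A† = (1 + 2i)·F_n`, where `F_n` is the `n`-th Fibonacci number. -/
theorem det_matAdag_fib (n : ℕ) (hn : 5 ≤ n) :
    Matrix.det (matAdag n 1 Complex.I) = (1 + 2 * Complex.I) * (Nat.fib n : ℂ) := by
  obtain ⟨k, rfl⟩ : ∃ k, n = k + 3 := ⟨n - 3, by omega⟩
  have hd : ∀ j < k + 1, matAdagDiag (k + 3) 1 Complex.I (j + 1) = 1 := fun j _ => if_neg (by omega)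
  have hu : ∀ j, matAdagOffDiag (k + 3) Complex.I j * matAdagOffDiag (k + 3) Complex.I j = -1 :=
    fun j => by rw [matAdagOffDiag_mul_self, Complex.I_mul_I]
  have hfirst : matAdagDiag (k + 3) 1 Complex.I 0 = 1 + Complex.I := if_pos (Or.inl rfl)
  have hlast : matAdagDiag (k + 3) 1 Complex.I (k + 2) = 1 + Complex.I := if_pos (by omega)
  rw [matAdag_eq_tridiag, det_tridiag_add_two, det_tridiag_eq_fib hd (fun j _ => hu j),
    det_tridiag_eq_fib (fun j hj => hd j (by omega)) (fun j _ => hu j), hu, hfirst, hlast,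
    Nat.fib_add_two (n := k + 1), Nat.fib_add_two (n := k)]
  push_cast
  linear_combination (↑(Nat.fib (k + 1)) + ↑(Nat.fib k) : ℂ) * Complex.I_mul_I
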